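/- (Proposition 2) If n > 3 and c is an arrangement of A with c_n = a_n (the largest element placed last), then c is not optimal. -/
import Mathlib


open Finset

/-- Partial sums of the sequence `c` (1-indexed): `partSum c k = c 1 + ⋯ + c k`. -/
noncomputable def partSum (c : ℕ → ℝ) (k : ℕ) : ℝ := ∑ i ∈ Finset.Icc 1 k, c i

/-- The mean `S̄` of the partial sums `s_1, …, s_n`. -/
noncomputable def meanPS (n : ℕ) (c : ℕ → ℝ) : ℝ :=
  (1 / (n : ℝ)) * ∑ k ∈ Finset.Icc 1 n, partSum c k

/-- The variance `f(c)` of the partial sums `s_1, …, s_n`. -/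
noncomputable def varPS (n : ℕ) (c : ℕ → ℝ) : ℝ :=
  (1 / (n : ℝ)) * ∑ k ∈ Finset.Icc 1 n, (partSum c k - meanPS n c) ^ 2

/-- The `(i,j)`-partial mean `μ_{ij}(S) = (1/(j-i)) ∑_{k=i}^{j-1} s_k`. -/
noncomputable def partMean (c : ℕ → ℝ) (i j : ℕ) : ℝ :=
  (1 / ((j : ℝ) - (i : ℝ))) * ∑ k ∈ Finset.Icc i (j - 1), partSum c k

/-- The `(i,j)`-interchange of `c`: swap the entries in positions `i` and `j`. -/
noncomputable def swapSeq (c : ℕ → ℝ) (i j : ℕ) : ℕ → ℝ := fun k => c (Equiv.swap i j k)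

/-- `c` is an arrangement (permutation) of `a` on the index range `1..n`. -/
def IsArrangement (n : ℕ) (a c : ℕ → ℝ) : Prop :=
  ∃ σ : ℕ → ℕ, Set.BijOn σ (Set.Icc 1 n) (Set.Icc 1 n) ∧
    ∀ k ∈ Set.Icc 1 n, c k = a (σ k)

/-- The dual sequence `c^d = (c_1, c_n, c_{n-1}, …, c_2)`. -/
noncomputable def dualSeq (n : ℕ) (c : ℕ → ℝ) : ℕ → ℝ :=
  fun k => if 2 ≤ k then c (n + 2 - k) else c k

private lemma sum_top2 (f : ℕ → ℝ) (m : ℕ) :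
    ∑ k ∈ Icc 1 (m+4), f k = ∑ k ∈ Icc 1 (m+2), f k + f (m+3) + f (m+4) := by
  rw [show m+4 = (m+3)+1 from rfl, Finset.sum_Icc_succ_top (by omega),
      show m+3 = (m+2)+1 from rfl, Finset.sum_Icc_succ_top (by omega)]

private lemma varPS_eq (n : ℕ) (hn : 0 < n) (c : ℕ → ℝ) :
    varPS n c = (1/(n:ℝ)) * (∑ k ∈ Icc 1 n, (partSum c k)^2) - (meanPS n c)^2 := by
  have hcard : (Icc 1 n).card = n := by rw [Nat.card_Icc]; omega
  have hN : (0:ℝ) < n := by exact_mod_cast hn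
  unfold varPS meanPS
  set T := ∑ k ∈ Icc 1 n, partSum c k with hT
  have key : ∑ k ∈ Icc 1 n, (partSum c k - 1/(n:ℝ) * T)^2
      = (∑ k ∈ Icc 1 n, (partSum c k)^2) - (2*(1/(n:ℝ)*T))*T + (n:ℝ)*(1/(n:ℝ)*T)^2 := by
    have h1 : ∀ k ∈ Icc 1 n, (partSum c k - 1/(n:ℝ)*T)^2
        = (partSum c k)^2 - (2*(1/(n:ℝ)*T))*partSum c k + (1/(n:ℝ)*T)^2 := fun k _ => by ring
    rw [Finset.sum_congr rfl h1, Finset.sum_add_distrib, Finset.sum_sub_distrib,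
      ← Finset.mul_sum, Finset.sum_const, hcard, nsmul_eq_mul, ← hT]
  rw [key]
  field_simp
  ring

/-- Proposition 2: if the largest element is placed last, the arrangement
is not optimal. -/
theorem not_optimal_of_largest_last (n : ℕ) (hn : 3 < n) (a : ℕ → ℝ)
    (ha1 : 0 < a 1) (ha : ∀ i j, 1 ≤ i → i < j → j ≤ n → a i < a j)
    (c : ℕ → ℝ) (hc : IsArrangement n a c) (hcn : c n = a n) :
    ¬ (∀ c'', IsArrangement n a c'' → varPS n c'' ≤ varPS n c) := by
  obtain ⟨m, rfl⟩ : ∃ m, n = m + 4 := ⟨n - 4, by omega⟩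
  obtain ⟨σ, ⟨hmap, hinj, hsurj⟩, hca⟩ := hc
  -- positivity of a on [1, m+4]
  have hapos : ∀ j, 1 ≤ j → j ≤ m+4 → 0 < a j := by
    intro j h1 h2
    rcases eq_or_lt_of_le h1 with h | h
    · rwa [← h]
    · exact lt_trans ha1 (ha 1 j le_rfl h h2)
  -- positivity of c on [1, m+4]
  have hcpos : ∀ k, 1 ≤ k → k ≤ m+4 → 0 < c k := by
    intro k h1 h2
    have hk : k ∈ Set.Icc 1 (m+4) := ⟨h1, h2⟩
    rw [hca k hk]
    exact hapos _ (hmap hk).1 (hmap hk).2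
  -- σ (m+4) = m+4
  have hm4 : (m+4 : ℕ) ∈ Set.Icc 1 (m+4) := ⟨by omega, le_rfl⟩
  have hm3 : (m+3 : ℕ) ∈ Set.Icc 1 (m+4) := ⟨by omega, by omega⟩
  have hσ4 : σ (m+4) = m+4 := by
    by_contra hne
    have h1 := hmap hm4
    have hlt : σ (m+4) < m+4 := lt_of_le_of_ne h1.2 hne
    have := ha (σ (m+4)) (m+4) h1.1 hlt le_rfl
    rw [← hca _ hm4, hcn] at this
    exact lt_irrefl _ this
  -- c (m+3) < c (m+4)
  have hσ3 : σ (m+3) < m+4 := by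
    have h1 := hmap hm3
    rcases lt_or_eq_of_le h1.2 with h | h
    · exact h
    · exfalso
      have := hinj hm3 hm4 (by rw [h, hσ4])
      omega
  have hδ : 0 < c (m+4) - c (m+3) := by
    have h1 := hmap hm3
    have : c (m+3) < a (m+4) := by
      rw [hca _ hm3]; exact ha _ _ h1.1 hσ3 le_rfl
    rw [hcn]; linarith
  -- step lemmas for partial sums
  have hstep : ∀ (f : ℕ → ℝ) (k : ℕ), partSum f (k+1) = partSum f k + f (k+1) := by
    intro f k
    unfold partSum
    rw [Finset.sum_Icc_succ_top (by omega)]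
  have hs3 : partSum c (m+3) = partSum c (m+2) + c (m+3) := hstep c (m+2)
  have hs4 : partSum c (m+4) = partSum c (m+3) + c (m+4) := hstep c (m+3)
  -- swap maps Icc to itself
  have hswapIcc : ∀ k ∈ Set.Icc 1 (m+4), Equiv.swap (m+3) (m+4) k ∈ Set.Icc 1 (m+4) := by
    intro k hk
    rcases eq_or_ne k (m+3) with rfl | h3
    · rw [Equiv.swap_apply_left]; exact hm4
    rcases eq_or_ne k (m+4) with rfl | h4
    · rw [Equiv.swap_apply_right]; exact hm3
    · rw [Equiv.swap_apply_of_ne_of_ne h3 h4]; exact hk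
  -- c'' is an arrangement
  have harr : IsArrangement (m+4) a (swapSeq c (m+3) (m+4)) := by
    refine ⟨fun k => σ (Equiv.swap (m+3) (m+4) k), ⟨?_, ?_, ?_⟩, ?_⟩
    · intro k hk; exact hmap (hswapIcc k hk)
    · intro x hx y hy hxy
      have := hinj (hswapIcc x hx) (hswapIcc y hy) hxy
      exact (Equiv.swap (m+3) (m+4)).injective this
    · intro y hy
      obtain ⟨x, hx, hxe⟩ := hsurj hy
      exact ⟨Equiv.swap (m+3) (m+4) x, hswapIcc x hx, by simp [Equiv.swap_apply_self, hxe]⟩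
    · intro k hk
      exact hca _ (hswapIcc k hk)
  -- partial sums of c''
  have hps_low : ∀ k, k ≤ m+2 → partSum (swapSeq c (m+3) (m+4)) k = partSum c k := by
    intro k hk
    unfold partSum swapSeq
    refine Finset.sum_congr rfl (fun i hi => ?_)
    simp only [Finset.mem_Icc] at hi
    rw [Equiv.swap_apply_of_ne_of_ne (by omega) (by omega)]
  have hc3'' : swapSeq c (m+3) (m+4) (m+3) = c (m+4) := by
    simp [swapSeq]
  have hc4'' : swapSeq c (m+3) (m+4) (m+4) = c (m+3) := by
    simp [swapSeq]
  have hps3 : partSum (swapSeq c (m+3) (m+4)) (m+3) = partSum c (m+2) + c (m+4) := by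
    rw [show m+3 = (m+2)+1 from rfl, hstep, hps_low _ le_rfl]
    congr 1
  have hps4 : partSum (swapSeq c (m+3) (m+4)) (m+4) = partSum c (m+4) := by
    unfold partSum
    rw [sum_top2, sum_top2]
    have hl := hps_low (m+2) le_rfl
    unfold partSum at hl
    unfold swapSeq at hl ⊢
    rw [hl]
    have e3 : c (Equiv.swap (m+3) (m+4) (m+3)) = c (m+4) := hc3''
    have e4 : c (Equiv.swap (m+3) (m+4) (m+4)) = c (m+3) := hc4''
    rw [e3, e4]; ring
  have hlowsum : ∑ k ∈ Icc 1 (m+2), partSum (swapSeq c (m+3) (m+4)) k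
      = ∑ k ∈ Icc 1 (m+2), partSum c k :=
    Finset.sum_congr rfl (fun k hk => hps_low k (Finset.mem_Icc.mp hk).2)
  have hlowsq : ∑ k ∈ Icc 1 (m+2), (partSum (swapSeq c (m+3) (m+4)) k)^2
      = ∑ k ∈ Icc 1 (m+2), (partSum c k)^2 :=
    Finset.sum_congr rfl (fun k hk => by rw [hps_low k (Finset.mem_Icc.mp hk).2])
  have hsum1 : ∑ k ∈ Icc 1 (m+4), partSum (swapSeq c (m+3) (m+4)) k
      = (∑ k ∈ Icc 1 (m+4), partSum c k) + (c (m+4) - c (m+3)) := by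
    rw [sum_top2 (fun k => partSum (swapSeq c (m+3) (m+4)) k) m,
      sum_top2 (fun k => partSum c k) m, hlowsum, hps3, hps4, hs3]
    ring
  have hsq : ∑ k ∈ Icc 1 (m+4), (partSum (swapSeq c (m+3) (m+4)) k)^2
      = (∑ k ∈ Icc 1 (m+4), (partSum c k)^2)
        + (2 * partSum c (m+3) * (c (m+4) - c (m+3)) + (c (m+4) - c (m+3))^2) := by
    rw [sum_top2 (fun k => (partSum (swapSeq c (m+3) (m+4)) k)^2) m,
      sum_top2 (fun k => (partSum c k)^2) m, hlowsq, hps3, hps4, hs3]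
    ring
  -- bound on the sum of partial sums
  have hmono : ∀ k ∈ Icc 1 (m+2), partSum c k ≤ partSum c (m+2) := by
    intro k hk
    simp only [Finset.mem_Icc] at hk
    unfold partSum
    apply Finset.sum_le_sum_of_subset_of_nonneg (Finset.Icc_subset_Icc_right hk.2)
    intro i hi _
    simp only [Finset.mem_Icc] at hi
    exact (hcpos i hi.1 (by omega)).le
  have hTb : ∑ k ∈ Icc 1 (m+4), partSum c k
      ≤ ((m:ℝ)+2) * partSum c (m+2) + partSum c (m+3) + partSum c (m+4) := by
    rw [sum_top2 (fun k => partSum c k) m]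
    have h1 : ∑ k ∈ Icc 1 (m+2), partSum c k ≤ ((m:ℝ)+2) * partSum c (m+2) := by
      calc ∑ k ∈ Icc 1 (m+2), partSum c k ≤ ∑ _k ∈ Icc 1 (m+2), partSum c (m+2) :=
            Finset.sum_le_sum hmono
        _ = ((m:ℝ)+2) * partSum c (m+2) := by
            rw [Finset.sum_const, Nat.card_Icc, nsmul_eq_mul]
            push_cast
            ring_nf
    linarith
  -- key inequality
  have hc3pos : 0 < c (m+3) := hcpos _ (by omega) (by omega)
  have hc4pos : 0 < c (m+4) := hcpos _ (by omega) (by omega)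
  have hNpos : (0:ℝ) < ((m+4:ℕ):ℝ) := by positivity
  have key : 0 < 2*((m+4:ℕ):ℝ)*partSum c (m+3) + (((m+4:ℕ):ℝ)-1)*(c (m+4) - c (m+3))
      - 2*(∑ k ∈ Icc 1 (m+4), partSum c k) := by
    push_cast
    have hmnn : (0:ℝ) ≤ (m:ℝ) := Nat.cast_nonneg m
    nlinarith [hTb, hs3, hs4, mul_nonneg hmnn hc3pos.le, mul_nonneg hmnn hc4pos.le,
      mul_nonneg hmnn hδ.le]
  -- conclude
  have main : varPS (m+4) c < varPS (m+4) (swapSeq c (m+3) (m+4)) := by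
    rw [varPS_eq (m+4) (by omega) c, varPS_eq (m+4) (by omega) (swapSeq c (m+3) (m+4))]
    unfold meanPS
    rw [hsq, hsum1]
    have e : ∀ X T d s N : ℝ, 0 < N → 0 < d*(2*N*s + (N-1)*d - 2*T) →
        1/N * X - (1/N * T)^2 < 1/N*(X + (2*s*d + d^2)) - (1/N*(T+d))^2 := by
      intro X T d s N hN h
      have heq : 1/N*(X + (2*s*d+d^2)) - (1/N*(T+d))^2 - (1/N*X - (1/N*T)^2)
          = (d*(2*N*s + (N-1)*d - 2*T))/N^2 := by
        field_simp
        ring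
      have hp : 0 < (d*(2*N*s + (N-1)*d - 2*T))/N^2 := div_pos h (by positivity)
      linarith [heq, hp]
    have hprod : 0 < (c (m+4) - c (m+3)) * (2*((m+4:ℕ):ℝ)*partSum c (m+3)
        + (((m+4:ℕ):ℝ)-1)*(c (m+4) - c (m+3)) - 2*(∑ k ∈ Icc 1 (m+4), partSum c k)) :=
      mul_pos hδ key
    exact e _ _ _ _ _ hNpos hprod
  intro h
  exact absurd (h _ harr) (not_le.mpr main)
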